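/- arXiv:math/0208036 — 3 statements merged into one kernel-verified Lean document; each statement's English description precedes it below -/
import Mathlib

section
/- Suppose X₁, …, X_n are pointwise linearly independent commuting vector fields on an open set, Π̃ = Σ_{i<j} f_ij X_i ∧ X_j a bivector field, and X_k(f_ij) = 0 for all i, j, k. Then the Schouten bracket [Π̃, Π̃] vanishes, i.e. Π̃ is a Poisson bivector. -/
/-- Partial derivative `∂f/∂x_b` on `ℝ^m`. -/
noncomputable def pd {m : ℕ} (f : (Fin m → ℝ) → ℝ) (b : Fin m) (x : Fin m → ℝ) : ℝ :=
  fderiv ℝ f x (Pi.single b 1)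

/-- Derivative of `f` along the vector field with components `X a`. -/
noncomputable def dirDeriv {m : ℕ} (X : Fin m → (Fin m → ℝ) → ℝ)
    (f : (Fin m → ℝ) → ℝ) (x : Fin m → ℝ) : ℝ :=
  ∑ b : Fin m, X b x * pd f b x

/-- The `(i,j,k)` component of the Schouten bracket `[π, π]` of a bivector field
on `ℝ^m`; its vanishing is the Poisson condition. -/
noncomputable def schouten {m : ℕ} (P : Fin m → Fin m → (Fin m → ℝ) → ℝ)
    (i j k : Fin m) (x : Fin m → ℝ) : ℝ :=
  ∑ l : Fin m,
    (P l i x * pd (P j k) l x + P l j x * pd (P k i) l x + P l k x * pd (P i j) l x)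

/-- Product rule for `pd`. -/
lemma pd_mul {m : ℕ} (g h : (Fin m → ℝ) → ℝ) (x : Fin m → ℝ) (b : Fin m)
    (hg : DifferentiableAt ℝ g x) (hh : DifferentiableAt ℝ h x) :
    pd (fun y => g y * h y) b x = pd g b x * h x + g x * pd h b x := by
  unfold pd
  rw [fderiv_fun_mul hg hh]
  simp only [ContinuousLinearMap.add_apply, ContinuousLinearMap.smul_apply, smul_eq_mul]
  ring

/-- `pd` commutes with finite sums. -/
lemma pd_sum {m : ℕ} {ι : Type*} (s : Finset ι) (g : ι → (Fin m → ℝ) → ℝ)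
    (x : Fin m → ℝ) (b : Fin m) (h : ∀ i ∈ s, DifferentiableAt ℝ (g i) x) :
    pd (fun y => ∑ i ∈ s, g i y) b x = ∑ i ∈ s, pd (g i) b x := by
  unfold pd
  rw [fderiv_fun_sum h]
  simp

/-- Algebraic cancellation of one pair of quadruple sums, using skewness of `F`
and symmetry of `G`. -/
lemma pair_sum_cancel {n : ℕ} (F : Fin n → Fin n → ℝ) (hF : ∀ p q, F q p = -F p q)
    (G : Fin n → Fin n → ℝ) (hG : ∀ p q, G q p = G p q)
    (A B : Fin n → ℝ) :
    ((∑ r, ∑ s, ∑ p, ∑ q, F r s * F p q * (A s * (G r p * B q))) +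
      (∑ r, ∑ s, ∑ p, ∑ q, F r s * F p q * (B s * (A p * G r q)))) = 0 := by
  set f2 : Fin n → Fin n → Fin n → Fin n → ℝ :=
    fun r s p q => F r s * F p q * (B s * (A p * G r q)) with hf2
  -- reindex the second sum
  have h2 : (∑ r, ∑ s, ∑ p, ∑ q, f2 r s p q)
      = ∑ r, ∑ s, ∑ p, ∑ q, F r q * F s p * (A s * (G r p * B q)) := by
    refine Finset.sum_congr rfl fun r _ => ?_
    have step : (∑ s, ∑ p, ∑ q, F r q * F s p * (A s * (G r p * B q)))
        = ∑ q, ∑ s, ∑ p, f2 r q s p := by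
      calc (∑ s, ∑ p, ∑ q, F r q * F s p * (A s * (G r p * B q)))
          = ∑ s, ∑ p, ∑ q, f2 r q s p := by
            refine Finset.sum_congr rfl fun s _ => Finset.sum_congr rfl fun p _ =>
              Finset.sum_congr rfl fun q _ => ?_
            simp only [hf2]; ring
        _ = ∑ s, ∑ q, ∑ p, f2 r q s p :=
            Finset.sum_congr rfl fun s _ => Finset.sum_comm
        _ = ∑ q, ∑ s, ∑ p, f2 r q s p := Finset.sum_comm
    rw [step]
  -- combine into a single sum
  set c : Fin n → Fin n → Fin n → Fin n → ℝ :=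
    fun r s p q => (F r s * F p q + F r q * F s p) * (A s * (G r p * B q)) with hc
  have hcomb : ((∑ r, ∑ s, ∑ p, ∑ q, F r s * F p q * (A s * (G r p * B q))) +
      (∑ r, ∑ s, ∑ p, ∑ q, f2 r s p q)) = ∑ r, ∑ s, ∑ p, ∑ q, c r s p q := by
    rw [h2, ← Finset.sum_add_distrib]
    refine Finset.sum_congr rfl fun r _ => ?_
    rw [← Finset.sum_add_distrib]
    refine Finset.sum_congr rfl fun s _ => ?_
    rw [← Finset.sum_add_distrib]
    refine Finset.sum_congr rfl fun p _ => ?_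
    rw [← Finset.sum_add_distrib]
    refine Finset.sum_congr rfl fun q _ => ?_
    simp only [hc]; ring
  -- the r ↔ p reindex of the combined sum equals itself
  have hswap : (∑ r, ∑ s, ∑ p, ∑ q, c p s r q) = ∑ r, ∑ s, ∑ p, ∑ q, c r s p q := by
    calc (∑ r, ∑ s, ∑ p, ∑ q, c p s r q)
        = ∑ r, ∑ p, ∑ s, ∑ q, c p s r q :=
          Finset.sum_congr rfl fun r _ => Finset.sum_comm
      _ = ∑ p, ∑ r, ∑ s, ∑ q, c p s r q := Finset.sum_comm
      _ = ∑ p, ∑ s, ∑ r, ∑ q, c p s r q :=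
          Finset.sum_congr rfl fun p _ => Finset.sum_comm
  -- termwise cancellation
  have hzero : ∀ r s p q : Fin n, c r s p q + c p s r q = 0 := by
    intro r s p q
    simp only [hc]
    rw [hG r p, hF p s, hF r s]
    ring
  have hT : (∑ r, ∑ s, ∑ p, ∑ q, c r s p q) = 0 := by
    have hdouble : (∑ r, ∑ s, ∑ p, ∑ q, c r s p q)
        + (∑ r, ∑ s, ∑ p, ∑ q, c p s r q) = 0 := by
      rw [← Finset.sum_add_distrib]
      refine Finset.sum_eq_zero fun r _ => ?_
      rw [← Finset.sum_add_distrib]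
      refine Finset.sum_eq_zero fun s _ => ?_
      rw [← Finset.sum_add_distrib]
      refine Finset.sum_eq_zero fun p _ => ?_
      rw [← Finset.sum_add_distrib]
      exact Finset.sum_eq_zero fun q _ => hzero r s p q
    rw [hswap] at hdouble
    linarith
  exact hcomb ▸ hT

/-- The cyclic sum of the three blocks vanishes. -/
lemma cyclic_sum_cancel {n : ℕ} (F : Fin n → Fin n → ℝ) (hF : ∀ p q, F q p = -F p q)
    (G1 G2 G3 : Fin n → Fin n → ℝ)
    (h1 : ∀ p q, G1 q p = G1 p q) (h2 : ∀ p q, G2 q p = G2 p q)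
    (h3 : ∀ p q, G3 q p = G3 p q)
    (V1 V2 V3 : Fin n → ℝ) :
    ((∑ r, ∑ s, ∑ p, ∑ q, F r s * F p q * (V1 s * (G2 r p * V3 q + V2 p * G3 r q))) +
     (∑ r, ∑ s, ∑ p, ∑ q, F r s * F p q * (V2 s * (G3 r p * V1 q + V3 p * G1 r q))) +
     (∑ r, ∑ s, ∑ p, ∑ q, F r s * F p q * (V3 s * (G1 r p * V2 q + V1 p * G2 r q)))) = 0 := by
  simp only [mul_add, Finset.sum_add_distrib]
  have p1 := pair_sum_cancel F hF G2 h2 V1 V3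
  have p2 := pair_sum_cancel F hF G3 h3 V2 V1
  have p3 := pair_sum_cancel F hF G1 h1 V3 V2
  linarith

/-- If `X₁, …, X_n` are pointwise linearly independent commuting smooth vector fields
on an open set `U`, `Π̃ = Σ_{i<j} f_ij X_i ∧ X_j` (equivalently, with `f` skew,
`Π̃^{ab} = Σ_{i,j} f_ij X_i^a X_j^b`), and `X_k(f_ij) = 0` for all `i,j,k`, then
`[Π̃, Π̃] = 0` on `U`, i.e. `Π̃` is a Poisson bivector. -/
theorem wedge_of_commuting_fields_is_poisson (m n : ℕ) (U : Set (Fin m → ℝ)) (hU : IsOpen U)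
    (X : Fin n → Fin m → (Fin m → ℝ) → ℝ)
    (hXsmooth : ∀ k a, ContDiff ℝ (⊤ : ℕ∞) (X k a))
    (hindep : ∀ x ∈ U, LinearIndependent ℝ (fun k : Fin n => fun a : Fin m => X k a x))
    (hcomm : ∀ k l : Fin n, ∀ a : Fin m, ∀ x ∈ U,
      dirDeriv (X k) (X l a) x - dirDeriv (X l) (X k a) x = 0)
    (f : Fin n → Fin n → (Fin m → ℝ) → ℝ)
    (hfsmooth : ∀ i j, ContDiff ℝ (⊤ : ℕ∞) (f i j))
    (hfskew : ∀ i j, f j i = -f i j)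
    (hf : ∀ k i j, ∀ x ∈ U, dirDeriv (X k) (f i j) x = 0) :
    ∀ i j k : Fin m, ∀ x ∈ U,
      schouten
        (fun a b y => ∑ i' : Fin n, ∑ j' : Fin n, f i' j' y * X i' a y * X j' b y)
        i j k x = 0 := by
  intro i j k x hx
  have hXd : ∀ p a (y : Fin m → ℝ), DifferentiableAt ℝ (X p a) y :=
    fun p a y => ((hXsmooth p a).differentiable (by simp)).differentiableAt
  have hfd : ∀ p q (y : Fin m → ℝ), DifferentiableAt ℝ (f p q) y :=
    fun p q y => ((hfsmooth p q).differentiable (by simp)).differentiableAt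
  have hpdP : ∀ (b c l : Fin m),
      pd (fun y => ∑ p, ∑ q, f p q y * X p b y * X q c y) l x
      = ∑ p, ∑ q, (pd (f p q) l x * (X p b x * X q c x)
          + f p q x * pd (X p b) l x * X q c x
          + f p q x * X p b x * pd (X q c) l x) := by
    intro b c l
    rw [pd_sum _ _ _ _ (fun p _ => DifferentiableAt.fun_sum
      (fun q _ => ((hfd p q x).fun_mul (hXd p b x)).fun_mul (hXd q c x)))]
    refine Finset.sum_congr rfl fun p _ => ?_
    rw [pd_sum _ _ _ _ (fun q _ => ((hfd p q x).fun_mul (hXd p b x)).fun_mul (hXd q c x))]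
    refine Finset.sum_congr rfl fun q _ => ?_
    rw [pd_mul _ _ _ _ ((hfd p q x).fun_mul (hXd p b x)) (hXd q c x),
        pd_mul _ _ _ _ (hfd p q x) (hXd p b x)]
    ring
  have hfz : ∀ r p q : Fin n, (∑ l, X r l x * pd (f p q) l x) = 0 :=
    fun r p q => hf r p q x hx
  have hgd : ∀ (r p : Fin n) (a : Fin m),
      (∑ l, X r l x * pd (X p a) l x) = dirDeriv (X r) (X p a) x := fun _ _ _ => rfl
  have key : ∀ a b c : Fin m,
      (∑ l, (∑ r, ∑ s, f r s x * X r l x * X s a x) *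
        pd (fun y => ∑ p, ∑ q, f p q y * X p b y * X q c y) l x)
      = ∑ r, ∑ s, ∑ p, ∑ q, f r s x * f p q x *
          (X s a x * (dirDeriv (X r) (X p b) x * X q c x
            + X p b x * dirDeriv (X r) (X q c) x)) := by
    intro a b c
    have e1 : ∀ l : Fin m, (∑ r, ∑ s, f r s x * X r l x * X s a x) *
        pd (fun y => ∑ p, ∑ q, f p q y * X p b y * X q c y) l x
        = ∑ r, ∑ s, ∑ p, ∑ q, (f r s x * X r l x * X s a x) *
            (pd (f p q) l x * (X p b x * X q c x)
              + f p q x * pd (X p b) l x * X q c x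
              + f p q x * X p b x * pd (X q c) l x) := by
      intro l
      rw [hpdP b c l, Finset.sum_mul]
      refine Finset.sum_congr rfl fun r _ => ?_
      rw [Finset.sum_mul]
      refine Finset.sum_congr rfl fun s _ => ?_
      rw [Finset.mul_sum]
      refine Finset.sum_congr rfl fun p _ => ?_
      rw [Finset.mul_sum]
    rw [Finset.sum_congr rfl fun l _ => e1 l]
    rw [Finset.sum_comm]
    refine Finset.sum_congr rfl fun r _ => ?_
    rw [Finset.sum_comm]
    refine Finset.sum_congr rfl fun s _ => ?_
    rw [Finset.sum_comm]
    refine Finset.sum_congr rfl fun p _ => ?_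
    rw [Finset.sum_comm]
    refine Finset.sum_congr rfl fun q _ => ?_
    have e2 : ∀ l : Fin m, (f r s x * X r l x * X s a x) *
        (pd (f p q) l x * (X p b x * X q c x)
          + f p q x * pd (X p b) l x * X q c x
          + f p q x * X p b x * pd (X q c) l x)
        = (f r s x * X s a x * (X p b x * X q c x)) * (X r l x * pd (f p q) l x)
          + (f r s x * X s a x * (f p q x * X q c x)) * (X r l x * pd (X p b) l x)
          + (f r s x * X s a x * (f p q x * X p b x)) * (X r l x * pd (X q c) l x) :=
      fun l => by ring
    rw [Finset.sum_congr rfl fun l _ => e2 l, Finset.sum_add_distrib, Finset.sum_add_distrib,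
        ← Finset.mul_sum, ← Finset.mul_sum, ← Finset.mul_sum, hfz r p q, hgd r p b, hgd r q c]
    ring
  have hFskew : ∀ p q : Fin n, f q p x = -(f p q x) := by
    intro p q
    rw [hfskew p q]
    rfl
  have hGsym : ∀ (a : Fin m) (p q : Fin n),
      dirDeriv (X q) (X p a) x = dirDeriv (X p) (X q a) x :=
    fun a p q => sub_eq_zero.mp (hcomm q p a x hx)
  simp only [schouten]
  rw [Finset.sum_add_distrib, Finset.sum_add_distrib, key i j k, key j k i, key k i j]
  exact cyclic_sum_cancel (fun r s => f r s x) hFskew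
    (fun r p => dirDeriv (X r) (X p i) x) (fun r p => dirDeriv (X r) (X p j) x)
    (fun r p => dirDeriv (X r) (X p k) x)
    (hGsym i) (hGsym j) (hGsym k)
    (fun s => X s i x) (fun s => X s j x) (fun s => X s k x)
end

section
/- The Lie algebra aff(n, K) is a Frobenius Lie algebra: there exists a linear functional ξ ∈ aff(n,K)* such that the skew bilinear form B_ξ(a, b) = ξ([a, b]) on aff(n, K) is nondegenerate. -/
/-- The bracket of `aff(n, K) = gl(n,K) ⋉ K^n`: `[(A,v),(B,w)] = ([A,B], Aw - Bv)`. -/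
def affBracket {K : Type*} [Field K] {n : ℕ}
    (x y : Matrix (Fin n) (Fin n) K × (Fin n → K)) :
    Matrix (Fin n) (Fin n) K × (Fin n → K) :=
  (x.1 * y.1 - y.1 * x.1, x.1.mulVec y.2 - y.1.mulVec x.2)

/-!
Take `ξ (A, v) = tr (S A) + v_{n-1}`, where `S` is the nilpotent shift `e_j ↦ e_{j+1}`. If
`ξ [(A, v), ·] = 0`, testing against `(B, 0)` and `(0, w)` gives `[S, A] = v e_{n-1}ᵀ` and
`e_{n-1}ᵀ A = 0`. Read on the basis, the first relation says `A e_{j+1} = S A e_j` and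
`v = S A e_{n-1}`: the columns of `A` are `S^j x` with `x = A e_0`, and `v = S^n x = 0`. The
second relation then gives `x_{n-1-j} = (S^j x)_{n-1} = 0` for every `j`, so `x = 0` and `A = 0`.
-/

open Matrix

section

variable {K : Type*} [Field K] {n : ℕ}

def affFunctional (S : Matrix (Fin n) (Fin n) K) (u : Fin n → K) :
    (Matrix (Fin n) (Fin n) K × (Fin n → K)) →ₗ[K] K :=
  (traceLinearMap (Fin n) K K ∘ₗ LinearMap.mulLeft K S).coprod (dotProductEquiv K (Fin n) u)

theorem affFunctional_apply (S : Matrix (Fin n) (Fin n) K) (u : Fin n → K)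
    (x : Matrix (Fin n) (Fin n) K × (Fin n → K)) :
    affFunctional S u x = trace (S * x.1) + u ⬝ᵥ x.2 := rfl

theorem vecMul_eq_zero_of_affFunctional_affBracket {S A : Matrix (Fin n) (Fin n) K}
    {u v : Fin n → K} (h : ∀ b, affFunctional S u (affBracket (A, v) b) = 0) :
    u ᵥ* A = 0 :=
  dotProduct_eq_zero _ fun w => by
    simpa [affFunctional_apply, affBracket, dotProduct_mulVec] using h (0, w)

theorem commutator_eq_vecMulVec_of_affFunctional_affBracket {S A : Matrix (Fin n) (Fin n) K}
    {u v : Fin n → K} (h : ∀ b, affFunctional S u (affBracket (A, v) b) = 0) :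
    S * A - A * S = vecMulVec v u := by
  refine ext_iff_trace_mul_right.2 fun B => ?_
  have hB := h (B, 0)
  simp only [affFunctional_apply, affBracket, mulVec_zero, zero_sub, dotProduct_neg] at hB
  have htrace : trace (S * (A * B - B * A)) = trace ((S * A - A * S) * B) := by
    simp only [Matrix.mul_sub, Matrix.sub_mul, trace_sub, Matrix.mul_assoc]
    rw [trace_mul_comm A, Matrix.mul_assoc]
  have hdot : u ⬝ᵥ B *ᵥ v = trace (vecMulVec v u * B) := by
    rw [trace_mul_comm, mul_vecMulVec, trace_vecMulVec, dotProduct_comm]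
  rw [← htrace, ← hdot]
  linear_combination hB

end

def shiftMatrix (R : Type*) [Zero R] [One R] (n : ℕ) : Matrix (Fin n) (Fin n) R :=
  of fun i j => if (i : ℕ) = j + 1 then 1 else 0

section

variable {R : Type*} {n m : ℕ}

theorem shiftMatrix_pow_apply [Semiring R] (k : ℕ) (i j : Fin n) :
    (shiftMatrix R n ^ k) i j = if (i : ℕ) = j + k then 1 else 0 := by
  induction k generalizing j with
  | zero => simp [one_apply, Fin.ext_iff]
  | succ k ih =>
    rw [pow_succ, mul_apply]
    simp_rw [ih]
    simp only [shiftMatrix, of_apply, mul_ite, mul_one, mul_zero]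
    by_cases hj : (j : ℕ) + 1 < n
    · rw [Finset.sum_eq_single ⟨j + 1, hj⟩]
      · simp [add_assoc, add_comm 1 k]
      · intro l _ hl; rw [if_neg (fun h => hl (Fin.ext h))]
      · simp
    · rw [if_neg (by omega)]
      exact Finset.sum_eq_zero fun l _ => if_neg (by omega)

theorem shiftMatrix_pow_self [Semiring R] : shiftMatrix R n ^ n = 0 := by
  ext i j
  rw [shiftMatrix_pow_apply, if_neg (by omega), Matrix.zero_apply]

theorem shiftMatrix_mulVec_single_castSucc [NonAssocSemiring R] (j : Fin m) :
    shiftMatrix R (m + 1) *ᵥ Pi.single j.castSucc 1 = Pi.single j.succ 1 := by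
  ext i
  simp [shiftMatrix, Pi.single_apply, Fin.ext_iff]

theorem shiftMatrix_mulVec_single_last [NonAssocSemiring R] :
    shiftMatrix R (m + 1) *ᵥ Pi.single (Fin.last m) 1 = 0 := by
  ext i
  simp only [mulVec_single_one, col_apply, shiftMatrix, of_apply, Fin.val_last, Pi.zero_apply]
  exact if_neg (by omega)

theorem shiftMatrix_pow_mulVec_apply_last [Semiring R] (x : Fin (m + 1) → R) (l : Fin (m + 1)) :
    (shiftMatrix R (m + 1) ^ (l.rev : ℕ) *ᵥ x) (Fin.last m) = x l := by
  rw [mulVec, dotProduct, Finset.sum_eq_single l]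
  · rw [shiftMatrix_pow_apply, if_pos, one_mul]
    rw [Fin.val_last, Fin.val_rev]
    omega
  · intro j _ hj
    rw [shiftMatrix_pow_apply, if_neg, zero_mul]
    rw [Fin.val_last, Fin.val_rev]
    have := Fin.val_ne_of_ne hj
    omega
  · simp

theorem eq_zero_of_shiftMatrix_commutator_eq [CommRing R]
    {A : Matrix (Fin (m + 1)) (Fin (m + 1)) R}
    {v : Fin (m + 1) → R}
    (hcomm : shiftMatrix R (m + 1) * A - A * shiftMatrix R (m + 1) =
      vecMulVec v (Pi.single (Fin.last m) 1))
    (hrow : Pi.single (Fin.last m) 1 ᵥ* A = 0) :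
    A = 0 ∧ v = 0 := by
  have hstep (j : Fin (m + 1)) :
      shiftMatrix R (m + 1) *ᵥ A *ᵥ Pi.single j 1 =
        A *ᵥ shiftMatrix R (m + 1) *ᵥ Pi.single j 1 +
          (Pi.single (Fin.last m) 1 : Fin (m + 1) → R) j • v := by
    rw [mulVec_mulVec, mulVec_mulVec, ← sub_eq_iff_eq_add', ← sub_mulVec, hcomm,
      vecMulVec_mulVec, dotProduct_single_one, op_smul_eq_smul]
  have hcol (j : Fin (m + 1)) :
      A *ᵥ Pi.single j 1 = shiftMatrix R (m + 1) ^ (j : ℕ) *ᵥ A *ᵥ Pi.single 0 1 := by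
    induction j using Fin.induction with
    | zero => simp
    | succ j ih =>
      rw [Fin.val_succ, pow_succ', ← mulVec_mulVec, ← Fin.val_castSucc, ← ih, hstep,
        Pi.single_eq_of_ne (Fin.castSucc_lt_last j).ne, zero_smul, add_zero,
        shiftMatrix_mulVec_single_castSucc]
  have hv : v = 0 := by
    have := hstep (Fin.last m)
    rw [shiftMatrix_mulVec_single_last, mulVec_zero, zero_add, Pi.single_eq_same, one_smul,
      hcol, Fin.val_last, mulVec_mulVec, ← pow_succ', shiftMatrix_pow_self, zero_mulVec] at this
    exact this.symm
  have hx : A *ᵥ Pi.single 0 1 = 0 := by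
    ext l
    rw [← shiftMatrix_pow_mulVec_apply_last (A *ᵥ Pi.single 0 1) l, ← hcol, mulVec_single_one,
      col_apply, ← row_apply A, ← single_one_vecMul, hrow, Pi.zero_apply, Pi.zero_apply]
  refine ⟨?_, hv⟩
  ext i j
  simpa [hx, mulVec_single_one] using congrFun (hcol j) i

end

theorem affn_is_frobenius_general (K : Type*) [Field K] (n : ℕ) :
    ∃ ξ : (Matrix (Fin n) (Fin n) K × (Fin n → K)) →ₗ[K] K,
      ∀ a : Matrix (Fin n) (Fin n) K × (Fin n → K),
        (∀ b : Matrix (Fin n) (Fin n) K × (Fin n → K), ξ (affBracket a b) = 0) → a = 0 := by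
  cases n with
  | zero => exact ⟨0, fun a _ => Subsingleton.elim a 0⟩
  | succ m =>
    refine ⟨affFunctional (shiftMatrix K (m + 1)) (Pi.single (Fin.last m) 1), ?_⟩
    rintro ⟨A, v⟩ h
    obtain ⟨rfl, rfl⟩ := eq_zero_of_shiftMatrix_commutator_eq
      (commutator_eq_vecMulVec_of_affFunctional_affBracket h)
      (vecMul_eq_zero_of_affFunctional_affBracket h)
    rfl

/-- `aff(n, K)` is a Frobenius Lie algebra: there is a linear functional `ξ` on
`aff(n,K)` for which the skew bilinear form `B_ξ(a,b) = ξ([a,b])` is nondegenerate. -/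
theorem affn_is_frobenius (K : Type*) [Field K] [CharZero K] (n : ℕ) :
    ∃ ξ : (Matrix (Fin n) (Fin n) K × (Fin n → K)) →ₗ[K] K,
      ∀ a : Matrix (Fin n) (Fin n) K × (Fin n → K),
        (∀ b : Matrix (Fin n) (Fin n) K × (Fin n → K), ξ (affBracket a b) = 0) → a = 0 :=
  affn_is_frobenius_general K n
end

section
/- For the linear Poisson structure of saff(2) on R^5 (brackets {h,e}=2e, {h,f}=-2f, {e,f}=h, {h,y₁}=y₁, {h,y₂}=-y₂, {e,y₂}=y₁, {f,y₁}=y₂, {y₁,y₂}=0), the set of points where the Poisson bivector has rank ≤ 2 is the 3-dimensional subspace {y₁ = y₂ = 0}; for the perturbed structure with {y₁,y₂} = h² + 4ef instead, this set is {y₁ = y₂ = 0, h² + 4ef = 0}. Hence no linear isomorphism of R^5 carries one Poisson structure to the other. -/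
open Matrix Submodule Module

section Aux

/-- If every column of `A` is a linear combination of two fixed vectors, then `A.rank ≤ 2`. -/
lemma rank_le_two_of_cols (A : Matrix (Fin 5) (Fin 5) ℝ) (u v : Fin 5 → ℝ)
    (h : ∀ j, ∃ a b : ℝ, ∀ i, A i j = a * u i + b * v i) : A.rank ≤ 2 := by
  rw [Matrix.rank_eq_finrank_span_cols]
  have hle : span ℝ (Set.range Aᵀ) ≤ span ℝ (Set.range ![u, v]) := by
    rw [Submodule.span_le]
    rintro _ ⟨j, rfl⟩
    obtain ⟨a, b, hab⟩ := h j
    have : Aᵀ j = a • u + b • v := by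
      funext i; simpa [Matrix.transpose_apply] using hab i
    rw [this]
    exact add_mem (smul_mem _ _ (subset_span ⟨0, rfl⟩)) (smul_mem _ _ (subset_span ⟨1, rfl⟩))
  calc finrank ℝ (span ℝ (Set.range Aᵀ)) ≤ finrank ℝ (span ℝ (Set.range ![u, v])) :=
        Submodule.finrank_mono hle
    _ ≤ 2 := by
        have h2 := finrank_range_le_card (R := ℝ) ![u, v]
        rw [Set.finrank] at h2
        exact h2.trans (by simp)

lemma submatrix_rank_le (A : Matrix (Fin 5) (Fin 5) ℝ) (f g : Fin 4 → Fin 5) :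
    (A.submatrix f g).rank ≤ A.rank := by
  have h1 : ((1 : Matrix (Fin 5) (Fin 5) ℝ).submatrix f (Equiv.refl (Fin 5))) * (A *
      ((1 : Matrix (Fin 5) (Fin 5) ℝ).submatrix (Equiv.refl (Fin 5)) g)) = A.submatrix f g := by
    rw [Matrix.mul_submatrix_one, Matrix.one_submatrix_mul]
    simp
  calc (A.submatrix f g).rank = _ := by rw [← h1]
    _ ≤ (A * ((1 : Matrix (Fin 5) (Fin 5) ℝ).submatrix (Equiv.refl (Fin 5)) g)).rank :=
        Matrix.rank_mul_le_right _ _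
    _ ≤ A.rank := Matrix.rank_mul_le_left _ _

lemma det_submatrix_eq_zero {A : Matrix (Fin 5) (Fin 5) ℝ} (h : A.rank ≤ 2)
    (f g : Fin 4 → Fin 5) : (A.submatrix f g).det = 0 := by
  by_contra hd
  have hu : IsUnit (A.submatrix f g) :=
    (Matrix.isUnit_iff_isUnit_det _).2 (isUnit_iff_ne_zero.2 hd)
  have h4 : (A.submatrix f g).rank = 4 := by
    simpa using Matrix.rank_of_isUnit _ hu
  have h5 := (submatrix_rank_le A f g).trans h
  rw [h4] at h5
  omega

end Aux

/-- Structure matrix of the linear (Lie–Poisson) bracket of `saff(2)` on `ℝ^5`, in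
coordinates `(h,e,f,y₁,y₂) = (p 0, …, p 4)`. -/
noncomputable def saffLin (p : Fin 5 → ℝ) : Matrix (Fin 5) (Fin 5) ℝ :=
  !![0,        2*p 1,  -2*p 2, p 3,   -p 4;
     -2*p 1,   0,      p 0,    0,     p 3;
     2*p 2,    -p 0,   0,      p 4,   0;
     -p 3,     0,      -p 4,   0,     0;
     p 4,      -p 3,   0,      0,     0]

/-- Structure matrix of the perturbed bracket, with `{y₁,y₂} = h² + 4ef`. -/
noncomputable def saffPert (p : Fin 5 → ℝ) : Matrix (Fin 5) (Fin 5) ℝ :=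
  !![0,        2*p 1,  -2*p 2, p 3,                  -p 4;
     -2*p 1,   0,      p 0,    0,                    p 3;
     2*p 2,    -p 0,   0,      p 4,                  0;
     -p 3,     0,      -p 4,   0,                    p 0^2 + 4*p 1*p 2;
     p 4,      -p 3,   0,      -(p 0^2 + 4*p 1*p 2), 0]

set_option linter.unreachableTactic false in
set_option linter.unusedTactic false in
set_option linter.unnecessarySeqFocus false in
lemma lin_rank_le_two (p : Fin 5 → ℝ) (h3 : p 3 = 0) (h4 : p 4 = 0) :
    (saffLin p).rank ≤ 2 := by
  by_cases h1 : p 1 ≠ 0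
  · refine rank_le_two_of_cols _ ![0, -2*p 1, 2*p 2, 0, 0] ![2*p 1, 0, -p 0, 0, 0] ?_
    intro j
    fin_cases j
    · exact ⟨1, 0, fun i => by
        fin_cases i <;> (try simp [saffLin, Matrix.vecHead, Matrix.vecTail, h3, h4]) <;> (try field_simp) <;> (try ring)⟩
    · exact ⟨0, 1, fun i => by
        fin_cases i <;> (try simp [saffLin, Matrix.vecHead, Matrix.vecTail, h3, h4]) <;> (try field_simp) <;> (try ring)⟩
    · exact ⟨-(p 0)/(2*p 1), -(p 2)/(p 1), fun i => by
        fin_cases i <;> (try simp [saffLin, Matrix.vecHead, Matrix.vecTail, h3, h4]) <;> (try field_simp) <;> (try ring)⟩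
    · exact ⟨0, 0, fun i => by
        fin_cases i <;> (try simp [saffLin, Matrix.vecHead, Matrix.vecTail, h3, h4]) <;> (try field_simp) <;> (try ring)⟩
    · exact ⟨0, 0, fun i => by
        fin_cases i <;> (try simp [saffLin, Matrix.vecHead, Matrix.vecTail, h3, h4]) <;> (try field_simp) <;> (try ring)⟩
  by_cases h2 : p 2 ≠ 0
  · refine rank_le_two_of_cols _ ![0, -2*p 1, 2*p 2, 0, 0] ![-2*p 2, p 0, 0, 0, 0] ?_
    intro j
    fin_cases j
    · exact ⟨1, 0, fun i => by
        fin_cases i <;> (try simp [saffLin, Matrix.vecHead, Matrix.vecTail, h3, h4]) <;> (try field_simp) <;> (try ring)⟩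
    · exact ⟨-(p 0)/(2*p 2), -(p 1)/(p 2), fun i => by
        fin_cases i <;> (try simp [saffLin, Matrix.vecHead, Matrix.vecTail, h3, h4]) <;> (try field_simp) <;> (try ring)⟩
    · exact ⟨0, 1, fun i => by
        fin_cases i <;> (try simp [saffLin, Matrix.vecHead, Matrix.vecTail, h3, h4]) <;> (try field_simp) <;> (try ring)⟩
    · exact ⟨0, 0, fun i => by
        fin_cases i <;> (try simp [saffLin, Matrix.vecHead, Matrix.vecTail, h3, h4]) <;> (try field_simp) <;> (try ring)⟩
    · exact ⟨0, 0, fun i => by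
        fin_cases i <;> (try simp [saffLin, Matrix.vecHead, Matrix.vecTail, h3, h4]) <;> (try field_simp) <;> (try ring)⟩
  by_cases h0 : p 0 ≠ 0
  · refine rank_le_two_of_cols _ ![2*p 1, 0, -p 0, 0, 0] ![-2*p 2, p 0, 0, 0, 0] ?_
    intro j
    fin_cases j
    · exact ⟨-2*p 2/(p 0), -2*p 1/(p 0), fun i => by
        fin_cases i <;> (try simp [saffLin, Matrix.vecHead, Matrix.vecTail, h3, h4]) <;> (try field_simp) <;> (try ring)⟩
    · exact ⟨1, 0, fun i => by
        fin_cases i <;> (try simp [saffLin, Matrix.vecHead, Matrix.vecTail, h3, h4]) <;> (try field_simp) <;> (try ring)⟩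
    · exact ⟨0, 1, fun i => by
        fin_cases i <;> (try simp [saffLin, Matrix.vecHead, Matrix.vecTail, h3, h4]) <;> (try field_simp) <;> (try ring)⟩
    · exact ⟨0, 0, fun i => by
        fin_cases i <;> (try simp [saffLin, Matrix.vecHead, Matrix.vecTail, h3, h4]) <;> (try field_simp) <;> (try ring)⟩
    · exact ⟨0, 0, fun i => by
        fin_cases i <;> (try simp [saffLin, Matrix.vecHead, Matrix.vecTail, h3, h4]) <;> (try field_simp) <;> (try ring)⟩
  · push_neg at h0 h1 h2
    refine rank_le_two_of_cols _ 0 0 ?_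
    intro j
    refine ⟨0, 0, fun i => ?_⟩
    fin_cases i <;> fin_cases j <;>
      (try simp [saffLin, Matrix.vecHead, Matrix.vecTail, h0, h1, h2, h3, h4]) <;> (try ring)

lemma pert_eq_lin (p : Fin 5 → ℝ) (h3 : p 3 = 0) (h4 : p 4 = 0)
    (hq : p 0 ^ 2 + 4 * p 1 * p 2 = 0) : saffPert p = saffLin p := by
  have : p 0 ^ 2 + 4 * p 1 * p 2 = 0 := hq
  unfold saffPert saffLin
  rw [hq]
  norm_num

/-- first locus identity -/
lemma lin_locus : {p : Fin 5 → ℝ | (saffLin p).rank ≤ 2} =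
    {p : Fin 5 → ℝ | p 3 = 0 ∧ p 4 = 0} := by
  ext p
  simp only [Set.mem_setOf_eq]
  constructor
  · intro h
    have hd1 := det_submatrix_eq_zero h ![0,1,3,4] ![0,1,3,4]
    have hd2 := det_submatrix_eq_zero h ![0,2,3,4] ![0,2,3,4]
    have e1 : p 3 ^ 4 = 0 := by
      rw [← hd1, Matrix.det_succ_row_zero]
      simp only [Fin.sum_univ_succ, Fin.sum_univ_zero, Matrix.det_fin_three, Matrix.submatrix_apply]
      simp [Matrix.det_succ_row_zero, Fin.sum_univ_succ, Matrix.det_fin_three, saffLin,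
        Matrix.submatrix_apply, Fin.succAbove, Fin.lt_def, Fin.castSucc, Fin.castAdd, Fin.castLE]
      ring
    have e2 : p 4 ^ 4 = 0 := by
      rw [← hd2, Matrix.det_succ_row_zero]
      simp only [Fin.sum_univ_succ, Fin.sum_univ_zero, Matrix.det_fin_three, Matrix.submatrix_apply]
      simp [Matrix.det_succ_row_zero, Fin.sum_univ_succ, Matrix.det_fin_three, saffLin,
        Matrix.submatrix_apply, Fin.succAbove, Fin.lt_def, Fin.castSucc, Fin.castAdd, Fin.castLE]
      ring
    exact ⟨pow_eq_zero_iff (n := 4) (by norm_num) |>.mp e1,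
      pow_eq_zero_iff (n := 4) (by norm_num) |>.mp e2⟩
  · rintro ⟨h3, h4⟩
    exact lin_rank_le_two p h3 h4

/-- second locus identity -/
lemma pert_locus : {p : Fin 5 → ℝ | (saffPert p).rank ≤ 2} =
    {p : Fin 5 → ℝ | p 3 = 0 ∧ p 4 = 0 ∧ p 0 ^ 2 + 4 * p 1 * p 2 = 0} := by
  ext p
  simp only [Set.mem_setOf_eq]
  constructor
  · intro h
    set q := p 0 ^ 2 + 4 * p 1 * p 2 with hqdef
    have hd1 := det_submatrix_eq_zero h ![0,1,3,4] ![0,1,3,4]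
    have hd2 := det_submatrix_eq_zero h ![1,2,3,4] ![1,2,3,4]
    have hd3 := det_submatrix_eq_zero h ![0,2,3,4] ![0,2,3,4]
    have e1 : (2 * p 1 * q - p 3 ^ 2) ^ 2 = 0 := by
      rw [← hd1, Matrix.det_succ_row_zero]
      simp only [Fin.sum_univ_succ, Fin.sum_univ_zero, Matrix.det_fin_three, Matrix.submatrix_apply]
      simp [Matrix.det_succ_row_zero, Fin.sum_univ_succ, Matrix.det_fin_three, saffPert,
        Matrix.submatrix_apply, Fin.succAbove, Fin.lt_def, Fin.castSucc, Fin.castAdd, Fin.castLE]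
      ring
    have e2 : (p 0 * q + p 3 * p 4) ^ 2 = 0 := by
      rw [← hd2, Matrix.det_succ_row_zero]
      simp only [Fin.sum_univ_succ, Fin.sum_univ_zero, Matrix.det_fin_three, Matrix.submatrix_apply]
      simp [Matrix.det_succ_row_zero, Fin.sum_univ_succ, Matrix.det_fin_three, saffPert,
        Matrix.submatrix_apply, Fin.succAbove, Fin.lt_def, Fin.castSucc, Fin.castAdd, Fin.castLE]
      ring
    have e3 : (2 * p 2 * q + p 4 ^ 2) ^ 2 = 0 := by
      rw [← hd3, Matrix.det_succ_row_zero]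
      simp only [Fin.sum_univ_succ, Fin.sum_univ_zero, Matrix.det_fin_three, Matrix.submatrix_apply]
      simp [Matrix.det_succ_row_zero, Fin.sum_univ_succ, Matrix.det_fin_three, saffPert,
        Matrix.submatrix_apply, Fin.succAbove, Fin.lt_def, Fin.castSucc, Fin.castAdd, Fin.castLE]
      ring
    have hA1 : 2 * p 1 * q - p 3 ^ 2 = 0 := by
      have := pow_eq_zero_iff (n := 2) (by norm_num) |>.mp e1; exact this
    have hA2 : p 0 * q + p 3 * p 4 = 0 := by
      have := pow_eq_zero_iff (n := 2) (by norm_num) |>.mp e2; exact this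
    have hA3 : 2 * p 2 * q + p 4 ^ 2 = 0 := by
      have := pow_eq_zero_iff (n := 2) (by norm_num) |>.mp e3; exact this
    have hq3 : q ^ 3 = 0 := by
      rw [hqdef]
      linear_combination (p 0 * q - p 3 * p 4) * hA2 + (2 * p 2 * q) * hA1 + p 3 ^ 2 * hA3
    have hq0 : q = 0 := by
      have := pow_eq_zero_iff (n := 3) (by norm_num) |>.mp hq3; exact this
    have h3 : p 3 = 0 := by
      have : p 3 ^ 2 = 0 := by rw [hq0] at hA1; linarith
      have := pow_eq_zero_iff (n := 2) (by norm_num) |>.mp this; exact this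
    have h4 : p 4 = 0 := by
      have : p 4 ^ 2 = 0 := by rw [hq0] at hA3; linarith
      have := pow_eq_zero_iff (n := 2) (by norm_num) |>.mp this; exact this
    exact ⟨h3, h4, hq0⟩
  · rintro ⟨h3, h4, hq⟩
    rw [pert_eq_lin p h3 h4 hq]
    exact lin_rank_le_two p h3 h4

/-- The rank-≤2 locus of the Lie–Poisson structure of `saff(2)` is `{y₁ = y₂ = 0}`;
for the perturbed structure it is `{y₁ = y₂ = 0, h² + 4ef = 0}`.  Hence no linear
isomorphism of `ℝ^5` carries one Poisson structure to the other. -/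
theorem saff2_rank_loci_and_nonlinearizability :
    ({p : Fin 5 → ℝ | (saffLin p).rank ≤ 2} = {p : Fin 5 → ℝ | p 3 = 0 ∧ p 4 = 0}) ∧
    ({p : Fin 5 → ℝ | (saffPert p).rank ≤ 2}
        = {p : Fin 5 → ℝ | p 3 = 0 ∧ p 4 = 0 ∧ p 0 ^ 2 + 4 * p 1 * p 2 = 0}) ∧
    ¬ ∃ M : Matrix (Fin 5) (Fin 5) ℝ, IsUnit M ∧
        ∀ p : Fin 5 → ℝ, saffPert (M.mulVec p) = M * saffLin p * M.transpose := by
  refine ⟨lin_locus, pert_locus, ?_⟩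
  rintro ⟨M, hM, hMp⟩
  have hMdet : IsUnit M.det := (Matrix.isUnit_iff_isUnit_det M).1 hM
  have hMTdet : IsUnit Mᵀ.det := by rwa [Matrix.det_transpose]
  -- the rank of saffPert (M p) equals the rank of saffLin p
  have hrank : ∀ p : Fin 5 → ℝ, (saffPert (M.mulVec p)).rank = (saffLin p).rank := by
    intro p
    rw [hMp p, Matrix.rank_mul_eq_left_of_isUnit_det Mᵀ (M * saffLin p) hMTdet,
      Matrix.rank_mul_eq_right_of_isUnit_det M (saffLin p) hMdet]
  -- hence M maps the subspace {p₃ = p₄ = 0} into the perturbed locus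
  have hloc : ∀ p : Fin 5 → ℝ, p 3 = 0 → p 4 = 0 →
      (M.mulVec p) 3 = 0 ∧ (M.mulVec p) 4 = 0 ∧
        (M.mulVec p) 0 ^ 2 + 4 * (M.mulVec p) 1 * (M.mulVec p) 2 = 0 := by
    intro p h3 h4
    have h2 : (saffPert (M.mulVec p)).rank ≤ 2 := by
      rw [hrank p]; exact lin_rank_le_two p h3 h4
    have hmem : M.mulVec p ∈ {p : Fin 5 → ℝ | (saffPert p).rank ≤ 2} := h2
    rw [pert_locus] at hmem
    exact hmem
  -- rows 3 and 4 of M vanish on the first three columns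
  have hcol : ∀ j : Fin 5, j = 0 ∨ j = 1 ∨ j = 2 → M 3 j = 0 ∧ M 4 j = 0 := by
    intro j hj
    have hs3 : (Pi.single j 1 : Fin 5 → ℝ) 3 = 0 := by
      rcases hj with rfl | rfl | rfl <;> exact Pi.single_eq_of_ne (by decide) _
    have hs4 : (Pi.single j 1 : Fin 5 → ℝ) 4 = 0 := by
      rcases hj with rfl | rfl | rfl <;> exact Pi.single_eq_of_ne (by decide) _
    have h := hloc (Pi.single j 1) hs3 hs4
    rw [Matrix.mulVec_single] at h
    exact ⟨by simpa using h.1, by simpa using h.2.1⟩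
  have z30 : M 3 0 = 0 := (hcol 0 (Or.inl rfl)).1
  have z40 : M 4 0 = 0 := (hcol 0 (Or.inl rfl)).2
  have z31 : M 3 1 = 0 := (hcol 1 (Or.inr (Or.inl rfl))).1
  have z41 : M 4 1 = 0 := (hcol 1 (Or.inr (Or.inl rfl))).2
  have z32 : M 3 2 = 0 := (hcol 2 (Or.inr (Or.inr rfl))).1
  have z42 : M 4 2 = 0 := (hcol 2 (Or.inr (Or.inr rfl))).2
  -- the 3×3 corner block of M
  set M' : Matrix (Fin 3) (Fin 3) ℝ :=
    !![M 0 0, M 0 1, M 0 2; M 1 0, M 1 1, M 1 2; M 2 0, M 2 1, M 2 2] with hM'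
  have hembed : ∀ v : Fin 3 → ℝ, ∀ i : Fin 5,
      M.mulVec ![v 0, v 1, v 2, 0, 0] i =
        M i 0 * v 0 + M i 1 * v 1 + M i 2 * v 2 := by
    intro v i
    simp [Matrix.mulVec, dotProduct, Fin.sum_univ_five]
  have hMinj : Function.Injective M.mulVec := Matrix.mulVec_injective_iff_isUnit.2 hM
  have hM'inj : Function.Injective M'.mulVecLin := by
    intro v w hvw
    have hvw' : M'.mulVec (v - w) = 0 := by
      rw [Matrix.mulVec_sub]
      simpa [sub_eq_zero] using hvw
    set u := v - w with hu
    have hc : ∀ k : Fin 3, M' k 0 * u 0 + M' k 1 * u 1 + M' k 2 * u 2 = 0 := by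
      intro k
      have := congrFun hvw' k
      simpa [Matrix.mulVec, dotProduct, Fin.sum_univ_three] using this
    have hc0 := hc 0
    have hc1 := hc 1
    have hc2 := hc 2
    simp only [hM', Matrix.cons_val', Matrix.cons_val_zero, Matrix.cons_val_one,
      Matrix.head_cons, Matrix.empty_val', Matrix.cons_val_fin_one, Matrix.head_fin_const,
      Matrix.cons_val_two, Matrix.tail_cons, Matrix.of_apply] at hc0 hc1 hc2
    have hu5 : M.mulVec ![u 0, u 1, u 2, 0, 0] = 0 := by
      funext i
      rw [hembed u i]
      fin_cases i
      · simpa using hc0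
      · simpa using hc1
      · simpa using hc2
      · simp [z30, z31, z32]
      · simp [z40, z41, z42]
    have h0 : (![u 0, u 1, u 2, 0, 0] : Fin 5 → ℝ) = 0 := by
      apply hMinj
      rw [hu5]
      simp [Matrix.mulVec_zero]
    have hu0 : u = 0 := by
      funext i
      fin_cases i
      · exact congrFun h0 0
      · exact congrFun h0 1
      · exact congrFun h0 2
    exact sub_eq_zero.mp hu0
  have hM'surj : Function.Surjective M'.mulVecLin :=
    (LinearMap.injective_iff_surjective).1 hM'inj
  obtain ⟨v, hv⟩ := hM'surj ![1, 0, 0]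
  have hvk : ∀ k : Fin 3, M' k 0 * v 0 + M' k 1 * v 1 + M' k 2 * v 2 = ![1,0,0] k := by
    intro k
    have := congrFun hv k
    simpa [Matrix.mulVec, dotProduct, Fin.sum_univ_three] using this
  have hv0 := hvk 0
  have hv1 := hvk 1
  have hv2 := hvk 2
  simp only [hM', Matrix.cons_val', Matrix.cons_val_zero, Matrix.cons_val_one,
    Matrix.head_cons, Matrix.empty_val', Matrix.cons_val_fin_one, Matrix.head_fin_const,
    Matrix.cons_val_two, Matrix.tail_cons, Matrix.of_apply] at hv0 hv1 hv2
  set p : Fin 5 → ℝ := ![v 0, v 1, v 2, 0, 0] with hp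
  have hq := (hloc p (by simp [hp]) (by simp [hp])).2.2
  rw [show M.mulVec p 0 = 1 by rw [hp, hembed v 0]; simpa using hv0,
    show M.mulVec p 1 = 0 by rw [hp, hembed v 1]; simpa using hv1,
    show M.mulVec p 2 = 0 by rw [hp, hembed v 2]; simpa using hv2] at hq
  norm_num at hq
end
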